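/- Proposition 2.1 (infinite-horizon representation of the running infimum of the future drawup). Assume E[max(X_1,0)] < ∞ and E[X_1] < 0 (mean possibly −∞), so that M := sup_{s≥0} X_s is finite almost surely. Then for every t ≥ 0, \underline U^*_t = inf_{0≤u≤t} sup_{v≥u}(X_v − X_u) is equal in distribution to max{ M̃ − D_t , 0 }, where M̃ is any random variable independent of σ(X_u : 0 ≤ u ≤ t) with the same law as M; equivalently, for every x ≥ 0, P(\underline U^*_t > x) = ∫_{[0,∞)} P(M > x + z) P(D_t ∈ dz). -/

import Mathlib

open MeasureTheory ProbabilityTheory Filter Set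

noncomputable section

variable {Ω : Type*} [MeasurableSpace Ω]

/-- Running supremum of the process on `[0, t]`. -/
def ovX (X : ℝ → Ω → ℝ) (t : ℝ) (ω : Ω) : ℝ := sSup ((fun s => X s ω) '' Icc 0 t)

/-- Running infimum of the process on `[0, t]`. -/
def unX (X : ℝ → Ω → ℝ) (t : ℝ) (ω : Ω) : ℝ := sInf ((fun s => X s ω) '' Icc 0 t)

/-- Drawup `U_t = X_t - inf_{0≤s≤t} X_s`. -/
def drawup (X : ℝ → Ω → ℝ) (t : ℝ) (ω : Ω) : ℝ := X t ω - unX X t ω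

/-- Drawdown `D_t = sup_{0≤s≤t} X_s - X_t`. -/
def drawdown (X : ℝ → Ω → ℝ) (t : ℝ) (ω : Ω) : ℝ := ovX X t ω - X t ω

/-- Running supremum of the drawup. -/
def ovU (X : ℝ → Ω → ℝ) (t : ℝ) (ω : Ω) : ℝ := sSup ((fun u => drawup X u ω) '' Icc 0 t)

/-- Running supremum of the drawdown. -/
def ovD (X : ℝ → Ω → ℝ) (t : ℝ) (ω : Ω) : ℝ := sSup ((fun u => drawdown X u ω) '' Icc 0 t)

/-- Future drawup `U^*_{t,s} = sup_{t ≤ u < t+s} (X_u - X_t)`. -/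
def futDrawup (X : ℝ → Ω → ℝ) (t s : ℝ) (ω : Ω) : ℝ :=
  sSup ((fun u => X u ω - X t ω) '' Ico t (t + s))

/-- Future drawdown `D^*_{t,s} = inf_{t ≤ u < t+s} (X_u - X_t)`. -/
def futDrawdown (X : ℝ → Ω → ℝ) (t s : ℝ) (ω : Ω) : ℝ :=
  sInf ((fun u => X u ω - X t ω) '' Ico t (t + s))

/-- `\overline U^*_{t,s} = sup_{0≤u≤t} U^*_{u,s}`. -/
def ovUStar (X : ℝ → Ω → ℝ) (t s : ℝ) (ω : Ω) : ℝ :=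
  sSup ((fun u => futDrawup X u s ω) '' Icc 0 t)

/-- `\underline D^*_{t,s} = inf_{0≤u≤t} D^*_{u,s}`. -/
def unDStar (X : ℝ → Ω → ℝ) (t s : ℝ) (ω : Ω) : ℝ :=
  sInf ((fun u => futDrawdown X u s ω) '' Icc 0 t)

/-- `sup_{v ≥ u} (X_v - X_u)` as an extended real number. -/
def futSupE (X : ℝ → Ω → ℝ) (u : ℝ) (ω : Ω) : EReal :=
  ⨆ v : {v : ℝ // u ≤ v}, ((X v ω - X u ω : ℝ) : EReal)

/-- `inf_{v ≥ u} (X_v - X_u)` as an extended real number. -/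
def futInfE (X : ℝ → Ω → ℝ) (u : ℝ) (ω : Ω) : EReal :=
  ⨅ v : {v : ℝ // u ≤ v}, ((X v ω - X u ω : ℝ) : EReal)

/-- Infinite-horizon `\overline U^*_t = sup_{0≤u≤t} sup_{v≥u}(X_v - X_u)`. -/
def ovUStarInf (X : ℝ → Ω → ℝ) (t : ℝ) (ω : Ω) : EReal :=
  ⨆ u : Icc (0:ℝ) t, futSupE X u ω

/-- Infinite-horizon `\underline U^*_t = inf_{0≤u≤t} sup_{v≥u}(X_v - X_u)`. -/
def unUStarInf (X : ℝ → Ω → ℝ) (t : ℝ) (ω : Ω) : EReal :=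
  ⨅ u : Icc (0:ℝ) t, futSupE X u ω

/-- Infinite-horizon `\overline D^*_t = sup_{0≤u≤t} inf_{v≥u}(X_v - X_u)`. -/
def ovDStarInf (X : ℝ → Ω → ℝ) (t : ℝ) (ω : Ω) : EReal :=
  ⨆ u : Icc (0:ℝ) t, futInfE X u ω

/-- Infinite-horizon `\underline D^*_t = inf_{0≤u≤t} inf_{v≥u}(X_v - X_u)`. -/
def unDStarInf (X : ℝ → Ω → ℝ) (t : ℝ) (ω : Ω) : EReal :=
  ⨅ u : Icc (0:ℝ) t, futInfE X u ω

/-- All-time supremum `M = sup_{s ≥ 0} X_s` as an extended real number. -/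
def MSup (X : ℝ → Ω → ℝ) (ω : Ω) : EReal := ⨆ s : {s : ℝ // 0 ≤ s}, ((X s ω : ℝ) : EReal)

/-- All-time infimum `I = inf_{s ≥ 0} X_s` as an extended real number. -/
def IInf (X : ℝ → Ω → ℝ) (ω : Ω) : EReal := ⨅ s : {s : ℝ // 0 ≤ s}, ((X s ω : ℝ) : EReal)

/-- A (real-valued) Lévy process: càdlàg paths started at `0`, with stationary
increments that are independent of the past. -/
structure IsLevyProcess (P : Measure Ω) (X : ℝ → Ω → ℝ) : Prop where
  measurable : ∀ t : ℝ, Measurable (X t)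
  init : ∀ ω, X 0 ω = 0
  right_cont : ∀ ω, ∀ t : ℝ, 0 ≤ t → ContinuousWithinAt (fun u => X u ω) (Ici t) t
  left_lim : ∀ ω, ∀ t : ℝ, 0 < t → ∃ l : ℝ, Tendsto (fun u => X u ω) (nhdsWithin t (Iio t)) (nhds l)
  indep_incr : ∀ t : ℝ, 0 ≤ t →
    IndepFun (fun ω => (fun s : ℝ => X (t + max s 0) ω - X t ω))
      (fun ω => (fun u : Icc (0:ℝ) t => X u ω)) P
  stat_incr : ∀ t : ℝ, 0 ≤ t →
    Measure.map (fun ω => (fun s : ℝ => X (t + max s 0) ω - X t ω)) P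
      = Measure.map (fun ω => (fun s : ℝ => X (max s 0) ω)) P

/-- An exponential random variable of rate `q`, independent of the whole path of `X`. -/
structure IsExpIndep (P : Measure Ω) (X : ℝ → Ω → ℝ) (q : ℝ) (e : Ω → ℝ) : Prop where
  meas : Measurable e
  nonneg : ∀ ω, 0 ≤ e ω
  law : ∀ x : ℝ, 0 ≤ x → P {ω | x < e ω} = ENNReal.ofReal (Real.exp (-q * x))
  indep : IndepFun e (fun ω => (fun s : {s : ℝ // 0 ≤ s} => X s ω)) P

/-- Cramér's condition with exponent `γ`. -/
structure CramerCond (P : Measure Ω) (X : ℝ → Ω → ℝ) (γ : ℝ) : Prop where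
  gamma_pos : 0 < γ
  int_exp : Integrable (fun ω => Real.exp (γ * X 1 ω)) P
  exp_eq_one : ∫ ω, Real.exp (γ * X 1 ω) ∂P = 1
  int_X1 : Integrable (X 1) P
  mean_neg : ∫ ω, X 1 ω ∂P < 0
  int_exp_abs : Integrable (fun ω => Real.exp (γ * X 1 ω) * |X 1 ω|) P

/-!
For `u ∈ [0, t]` the future supremum `sup_{v ≥ u} (X_v - X_u)` is at least `max (S - D_t, 0)`,
where `S = sup_{v ≥ t} (X_v - X_t)`: take `v = u`, or `v ≥ t` and use `X_u ≤ sup_{[0,t]} X`.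
Choosing `u` where `X` nearly attains its running maximum on `[0, t]` shows that this bound is
attained by the infimum over `u`, so pathwise `\underline U^*_t = max (S - D_t, 0)`.
By the independence and stationarity of increments, `S` is independent of the path on `[0, t]`
(hence of `D_t`) and has the law of `M`, so `(D_t, S)` and `(D_t, M̃)` have the same law.
Right-continuity lets all suprema be taken over rational times, which makes them measurable.
-/

open Topology

theorem bddAbove_image_Icc_of_rightCont_of_leftLim {f : ℝ → ℝ} {a b : ℝ}
    (hr : ∀ x ∈ Icc a b, ContinuousWithinAt f (Ici x) x)
    (hl : ∀ x ∈ Ioc a b, ∃ l, Tendsto f (𝓝[<] x) (𝓝 l)) :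
    BddAbove (f '' Icc a b) := by
  refine isCompact_Icc.induction_on (p := fun s => BddAbove (f '' s)) (by simp)
    (fun s u hsu hu => hu.mono (image_mono hsu))
    (fun s u hs hu => by rw [image_union]; exact hs.union hu) fun x hx => ?_
  have hright : ∀ᶠ y in 𝓝[≥] x, f y ≤ f x + 1 :=
    (hr x hx).eventually (Iic_mem_nhds (lt_add_one _))
  rcases hx.1.eq_or_lt with rfl | hax
  · exact ⟨_, nhdsWithin_mono _ Icc_subset_Ici_self hright, f a + 1,
      by rintro _ ⟨y, hy, rfl⟩; exact hy⟩
  · obtain ⟨l, hl⟩ := hl x ⟨hax, hx.2⟩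
    have hleft : ∀ᶠ y in 𝓝[<] x, f y ≤ l + 1 := hl.eventually (Iic_mem_nhds (lt_add_one _))
    refine ⟨{y | f y ≤ max (l + 1) (f x + 1)}, nhdsWithin_le_nhds ?_, max (l + 1) (f x + 1),
      by rintro _ ⟨y, hy, rfl⟩; exact hy⟩
    rw [← nhdsLT_sup_nhdsGE]
    exact ⟨hleft.mono fun y hy => le_max_of_le_left hy,
      hright.mono fun y hy => le_max_of_le_right hy⟩

theorem iSup_ratCast_eq_iSup {β : Type*} [CompleteLinearOrder β] [TopologicalSpace β]
    [ClosedIicTopology β] {g : ℝ → β} (hg : ∀ x, ContinuousWithinAt g (Ici x) x) :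
    ⨆ q : ℚ, g q = ⨆ x, g x := by
  refine le_antisymm (iSup_le fun q => le_iSup g q) (iSup_le fun x => ?_)
  have hx : x ∈ closure (Ioi x ∩ range ((↑) : ℚ → ℝ)) :=
    closure_minimal (Rat.denseRange_cast.open_subset_closure_inter isOpen_Ioi) isClosed_closure
      (by rw [closure_Ioi]; exact mem_Ici.2 le_rfl)
  refine closure_minimal ?_ isClosed_Iic
    (((hg x).mono Ioi_subset_Ici_self).mono inter_subset_left |>.mem_closure_image hx)
  rintro _ ⟨_, ⟨-, q, rfl⟩, rfl⟩
  exact le_iSup (fun q : ℚ => g q) q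

/-- Unlike the supremum over all real times, this is measurable for the product σ-algebra. -/
def ratSup (g : ℝ → ℝ) : EReal := ⨆ q : ℚ, (g q : EReal)

theorem measurable_ratSup : Measurable ratSup :=
  Measurable.iSup fun q => (measurable_pi_apply (q : ℝ)).coe_real_ereal

section RightContinuous

variable {f : ℝ → ℝ} {a b : ℝ}

theorem ContinuousWithinAt.comp_monotone_Ici {φ : ℝ → ℝ} (hφ : Continuous φ) (hφm : Monotone φ)
    {x : ℝ} (hf : ContinuousWithinAt f (Ici (φ x)) (φ x)) :
    ContinuousWithinAt (f ∘ φ) (Ici x) x :=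
  hf.comp hφ.continuousWithinAt fun _ h => hφm h

theorem ratSup_eq_iSup {g : ℝ → ℝ} (hg : ∀ x, ContinuousWithinAt g (Ici x) x) :
    ratSup g = ⨆ x, (g x : EReal) :=
  iSup_ratCast_eq_iSup fun x =>
    continuous_coe_real_ereal.continuousAt.comp_continuousWithinAt (hg x)

theorem iSup_Ici_eq_ratSup (hf : ∀ y, a ≤ y → ContinuousWithinAt f (Ici y) y) :
    ⨆ v : {v // a ≤ v}, (f v : EReal) = ratSup fun s => f (a + max s 0) := by
  have hφ : ∀ s, a ≤ a + max s 0 := fun s => le_add_of_nonneg_right (le_max_right _ _)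
  have hsurj : Function.Surjective fun s : ℝ => (⟨a + max s 0, hφ s⟩ : {v // a ≤ v}) :=
    fun v => ⟨v - a, Subtype.ext (by simp [max_eq_left (sub_nonneg.2 v.2)])⟩
  have hcont (s : ℝ) : ContinuousWithinAt (fun s => f (a + max s 0)) (Ici s) s :=
    (hf _ (hφ s)).comp_monotone_Ici (φ := fun s => a + max s 0) (by fun_prop)
      fun _ _ h => add_le_add_right (max_le_max_right 0 h) a
  rw [ratSup_eq_iSup hcont]
  exact (hsurj.iSup_comp fun v : {v // a ≤ v} => (f v : EReal)).symm

theorem iSup_Icc_eq_ratSup (hab : a ≤ b) (hf : ∀ y ∈ Icc a b, ContinuousWithinAt f (Ici y) y) :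
    ⨆ u : Icc a b, (f u : EReal) = ratSup (IccExtend hab fun u => f u) := by
  have hcont (x : ℝ) : ContinuousWithinAt (IccExtend hab fun u => f u) (Ici x) x :=
    (hf _ (projIcc a b hab x).2).comp_monotone_Ici (φ := fun x => (projIcc a b hab x : ℝ))
      (continuous_subtype_val.comp continuous_projIcc) fun _ _ h => monotone_projIcc hab h
  rw [ratSup_eq_iSup hcont]
  exact ((projIcc_surjective hab).iSup_comp fun u : Icc a b => (f u : EReal)).symm

theorem coe_sSup_image_eq_iSup {s : Set ℝ} (hne : s.Nonempty) (hbdd : BddAbove (f '' s)) :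
    ((sSup (f '' s) : ℝ) : EReal) = ⨆ x : s, (f x : EReal) := by
  rw [Monotone.map_csSup_of_continuousAt continuous_coe_real_ereal.continuousAt
    EReal.coe_strictMono.monotone (hne.image f) hbdd, image_image, sSup_image']

end RightContinuous

theorem EReal.measure_ext_of_Ioi {μ ν : Measure EReal} [IsFiniteMeasure μ]
    (huniv : μ univ = ν univ) (h : ∀ x : ℝ, μ (Ioi x) = ν (Ioi x)) : μ = ν := by
  have : IsFiniteMeasure ν := ⟨huniv ▸ measure_lt_top μ univ⟩
  have hcompl : ∀ s, MeasurableSet s → μ s = ν s → μ sᶜ = ν sᶜ := fun s hs hμν => by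
    rw [measure_compl hs (measure_ne_top _ _), measure_compl hs (measure_ne_top _ _), huniv, hμν]
  have hIoi_bot : Ioi (⊥ : EReal) = ⋃ n : ℕ, Ioi ((-n : ℝ) : EReal) := by
    ext y
    simp only [mem_Ioi, mem_iUnion, bot_lt_iff_ne_bot, Ne, EReal.eq_bot_iff_forall_lt, not_forall,
      not_lt]
    refine ⟨fun ⟨r, hr⟩ => ?_, fun ⟨n, hn⟩ => ⟨_, hn.le⟩⟩
    obtain ⟨n, hn⟩ := exists_nat_gt (-r)
    exact ⟨n, lt_of_lt_of_le (by exact_mod_cast neg_lt.1 hn) hr⟩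
  have hmono : Monotone fun n : ℕ => Ioi ((-n : ℝ) : EReal) := fun m n hmn =>
    Ioi_subset_Ioi (by exact_mod_cast neg_le_neg (Nat.cast_le.2 hmn))
  refine Measure.ext_of_Iic μ ν fun a => ?_
  induction a using EReal.rec with
  | bot =>
    rw [← compl_Ioi]
    refine hcompl _ measurableSet_Ioi ?_
    rw [hIoi_bot, hmono.measure_iUnion, hmono.measure_iUnion]
    simp only [h]
  | coe x => rw [← compl_Ioi]; exact hcompl _ measurableSet_Ioi (h x)
  | top => simpa using huniv

section Pathwise

variable {α : Type*} {X : ℝ → α → ℝ} {ω : α} {t : ℝ}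

theorem max_futSupE_sub_drawdown_le_futSupE (hbdd : BddAbove ((fun s => X s ω) '' Icc 0 t))
    {u : ℝ} (hu : u ∈ Icc 0 t) :
    max (futSupE X t ω - drawdown X t ω) 0 ≤ futSupE X u ω := by
  have hle : ∀ v : {v // u ≤ v}, ((X v ω - X u ω : ℝ) : EReal) ≤ futSupE X u ω :=
    le_iSup (fun v : {v // u ≤ v} => ((X v ω - X u ω : ℝ) : EReal))
  refine max_le (EReal.sub_le_of_le_add (iSup_le fun v => ?_)) (by simpa using hle ⟨u, le_rfl⟩)
  calc ((X v ω - X t ω : ℝ) : EReal)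
      ≤ ((X v ω - X u ω : ℝ) : EReal) + (drawdown X t ω : EReal) := by
        rw [← EReal.coe_add, EReal.coe_le_coe_iff, drawdown, ovX]
        linarith [le_csSup hbdd (mem_image_of_mem (fun s => X s ω) hu)]
    _ ≤ futSupE X u ω + drawdown X t ω := add_le_add_left (hle ⟨v, hu.2.trans v.2⟩) _

theorem unUStarInf_le_max_futSupE_sub_drawdown (ht : 0 ≤ t)
    (hbdd : BddAbove ((fun s => X s ω) '' Icc 0 t)) :
    unUStarInf X t ω ≤ max (futSupE X t ω - drawdown X t ω) 0 := by
  refine EReal.le_of_forall_lt_iff_le.1 fun z hz => ?_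
  obtain ⟨w, hw, hwz⟩ := EReal.lt_iff_exists_real_btwn.1 hz
  have hw0 : 0 < w := by exact_mod_cast (le_max_right _ _).trans_lt hw
  have hwz : w < z := by exact_mod_cast hwz
  obtain ⟨_, ⟨u, hu, rfl⟩, hRu⟩ := exists_lt_of_lt_csSup
    ((nonempty_Icc.2 ht).image (fun s => X s ω)) (sub_lt_self (ovX X t ω) (sub_pos.2 hwz))
  refine (iInf_le _ ⟨u, hu⟩).trans (iSup_le fun ⟨v, hv⟩ => EReal.coe_le_coe_iff.2 ?_)
  change u ≤ v at hv
  rw [ovX] at hRu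
  change X v ω - X u ω ≤ z
  rcases le_total v t with hvt | htv
  · linarith [le_csSup hbdd (mem_image_of_mem (fun s => X s ω) ⟨hu.1.trans hv, hvt⟩)]
  · have hS : ((X v ω - X t ω : ℝ) : EReal) - drawdown X t ω < w :=
      (EReal.sub_le_sub (le_iSup_of_le (⟨v, htv⟩ : {v // t ≤ v}) le_rfl) le_rfl).trans_lt
        ((le_max_left _ _).trans_lt hw)
    rw [← EReal.coe_sub, EReal.coe_lt_coe_iff, drawdown, ovX] at hS
    linarith

theorem unUStarInf_eq_max_futSupE_sub_drawdown (ht : 0 ≤ t)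
    (hbdd : BddAbove ((fun s => X s ω) '' Icc 0 t)) :
    unUStarInf X t ω = max (futSupE X t ω - drawdown X t ω) 0 :=
  (unUStarInf_le_max_futSupE_sub_drawdown ht hbdd).antisymm
    (le_iInf fun u => max_futSupE_sub_drawdown_le_futSupE hbdd u.2)

end Pathwise

theorem ProbabilityTheory.IdentDistrib.ae_lt_top_of_coe {β : Type*} [MeasurableSpace β]
    {μ : Measure Ω} {ν : Measure β} {M : Ω → EReal} {Y : β → ℝ}
    (h : IdentDistrib M (fun ω => (Y ω : EReal)) μ ν) :
    ∀ᵐ ω ∂μ, M ω < ⊤ := by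
  have htop := h.measure_mem_eq (measurableSet_singleton ⊤)
  simpa [ae_iff, preimage] using htop

theorem identDistrib_of_measure_lt_eq {μ : Measure Ω} [IsFiniteMeasure μ] {M : Ω → EReal}
    {Y : Ω → ℝ} (hM : Measurable M) (hY : Measurable Y)
    (h : ∀ x : ℝ, μ {ω | (x : EReal) < M ω} = μ {ω | x < Y ω}) :
    IdentDistrib M (fun ω => (Y ω : EReal)) μ μ where
  aemeasurable_fst := hM.aemeasurable
  aemeasurable_snd := hY.coe_real_ereal.aemeasurable
  map_eq := by
    refine EReal.measure_ext_of_Ioi ?_ fun x => ?_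
    · rw [Measure.map_apply hM .univ, Measure.map_apply hY.coe_real_ereal .univ]
      rfl
    · rw [Measure.map_apply hM measurableSet_Ioi,
        Measure.map_apply hY.coe_real_ereal measurableSet_Ioi]
      simpa [preimage] using h x

/-- Applied to `IccExtend` of the path on `[0, t]`, this computes `D_t` as a measurable function
of that path. -/
def ratDrawdown (t : ℝ) (g : ℝ → ℝ) : ℝ := (ratSup g).toReal - g t

theorem measurable_ratDrawdown (t : ℝ) : Measurable (ratDrawdown t) :=
  measurable_ratSup.ereal_toReal.sub (measurable_pi_apply t)

namespace IsLevyProcess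

variable {P : Measure Ω} {X : ℝ → Ω → ℝ} {t : ℝ}

theorem bddAbove_image_Icc (hX : IsLevyProcess P X) (ω : Ω) (t : ℝ) :
    BddAbove ((fun s => X s ω) '' Icc 0 t) :=
  bddAbove_image_Icc_of_rightCont_of_leftLim (fun x hx => hX.right_cont ω x hx.1)
    fun x hx => hX.left_lim ω x hx.1

theorem unUStarInf_eq (hX : IsLevyProcess P X) (ht : 0 ≤ t) (ω : Ω) :
    unUStarInf X t ω = max (futSupE X t ω - drawdown X t ω) 0 :=
  unUStarInf_eq_max_futSupE_sub_drawdown ht (hX.bddAbove_image_Icc ω t)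

theorem mSup_eq_ratSup (hX : IsLevyProcess P X) (ω : Ω) :
    MSup X ω = ratSup fun s => X (max s 0) ω := by
  rw [MSup]
  simpa only [zero_add] using iSup_Ici_eq_ratSup (f := fun v => X v ω) (hX.right_cont ω)

theorem futSupE_eq_ratSup (hX : IsLevyProcess P X) (ht : 0 ≤ t) (ω : Ω) :
    futSupE X t ω = ratSup fun s => X (t + max s 0) ω - X t ω :=
  iSup_Ici_eq_ratSup (f := fun v => X v ω - X t ω) fun y hy =>
    (hX.right_cont ω y (ht.trans hy)).sub continuousWithinAt_const

theorem drawdown_eq_ratDrawdown (hX : IsLevyProcess P X) (ht : 0 ≤ t) (ω : Ω) :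
    drawdown X t ω = ratDrawdown t (IccExtend ht fun u : Icc 0 t => X u ω) := by
  have hsup := (coe_sSup_image_eq_iSup (nonempty_Icc.2 ht) (hX.bddAbove_image_Icc ω t)).trans
    (iSup_Icc_eq_ratSup ht fun y hy => hX.right_cont ω y hy.1)
  rw [drawdown, ovX, ratDrawdown, ← hsup, EReal.toReal_coe, IccExtend_right]

theorem measurable_mSup (hX : IsLevyProcess P X) : Measurable (MSup X) := by
  rw [funext hX.mSup_eq_ratSup]
  exact measurable_ratSup.comp (measurable_pi_lambda _ fun _ => hX.measurable _)

theorem measurable_drawdown (hX : IsLevyProcess P X) (ht : 0 ≤ t) :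
    Measurable (drawdown X t) := by
  rw [funext (hX.drawdown_eq_ratDrawdown ht)]
  exact (measurable_ratDrawdown t).comp (measurable_pi_lambda _ fun _ => hX.measurable _)

theorem identDistrib_futSupE_mSup (hX : IsLevyProcess P X) (ht : 0 ≤ t) :
    IdentDistrib (futSupE X t) (MSup X) P P := by
  rw [funext (hX.futSupE_eq_ratSup ht), funext hX.mSup_eq_ratSup]
  have hincr : IdentDistrib (fun ω s => X (t + max s 0) ω - X t ω) (fun ω s => X (max s 0) ω)
      P P :=
    ⟨(measurable_pi_lambda _ fun _ => (hX.measurable _).sub (hX.measurable t)).aemeasurable,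
      (measurable_pi_lambda _ fun _ => hX.measurable _).aemeasurable, hX.stat_incr t ht⟩
  exact hincr.comp measurable_ratSup

theorem indepFun_drawdown (hX : IsLevyProcess P X) (ht : 0 ≤ t) {β : Type*}
    [MeasurableSpace β] {Y : Ω → β} (hY : IndepFun (fun ω (u : Icc 0 t) => X u ω) Y P) :
    IndepFun (drawdown X t) Y P := by
  rw [funext (hX.drawdown_eq_ratDrawdown ht)]
  exact hY.comp ((measurable_ratDrawdown t).comp
    (measurable_pi_lambda _ fun _ => measurable_pi_apply _)) measurable_id

theorem indepFun_path_futSupE (hX : IsLevyProcess P X) (ht : 0 ≤ t) :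
    IndepFun (fun ω (u : Icc 0 t) => X u ω) (futSupE X t) P := by
  rw [funext (hX.futSupE_eq_ratSup ht)]
  exact (hX.indep_incr t ht).symm.comp measurable_id measurable_ratSup

end IsLevyProcess

theorem future_drawup_inf_representation_inf_horizon_general
    {Ω : Type*} [MeasurableSpace Ω] (P : Measure Ω) [IsProbabilityMeasure P]
    (X : ℝ → Ω → ℝ) (hX : IsLevyProcess P X)
    (t : ℝ) (ht : 0 ≤ t)
    (Mtilde : Ω → ℝ) (hMmeas : Measurable Mtilde)
    (hMindep : IndepFun Mtilde (fun ω => (fun u : Icc (0:ℝ) t => X u ω)) P)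
    (hMlaw : ∀ x : ℝ, P {ω | x < Mtilde ω} = P {ω | (x : EReal) < MSup X ω}) :
    (∀ᵐ ω ∂P, MSup X ω < ⊤) ∧
    (∀ x : ℝ, P {ω | (x : EReal) < unUStarInf X t ω}
        = P {ω | x < max (Mtilde ω - drawdown X t ω) 0}) := by
  have hlawM : IdentDistrib (MSup X) (fun ω => (Mtilde ω : EReal)) P P :=
    identDistrib_of_measure_lt_eq hX.measurable_mSup hMmeas fun x => (hMlaw x).symm
  refine ⟨hlawM.ae_lt_top_of_coe, fun x => ?_⟩
  have hpair : IdentDistrib (fun ω => (drawdown X t ω, futSupE X t ω))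
      (fun ω => (drawdown X t ω, (Mtilde ω : EReal))) P P :=
    (IdentDistrib.refl (hX.measurable_drawdown ht).aemeasurable).prodMk
      ((hX.identDistrib_futSupE_mSup ht).trans hlawM)
      (hX.indepFun_drawdown ht (hX.indepFun_path_futSupE ht))
      (hX.indepFun_drawdown ht (hMindep.symm.comp measurable_id measurable_coe_real_ereal))
  have key := (hpair.comp (u := fun p : ℝ × EReal => max (p.2 - p.1) 0) (by fun_prop)
    ).measure_mem_eq (measurableSet_Ioi (a := (x : EReal)))
  convert key using 2 <;> ext ω
  · simp [hX.unUStarInf_eq ht ω]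
  · simp [← EReal.coe_sub]

/-- **Proposition 2.1** (infinite-horizon representation of the running infimum of the
future drawup): if `E[X_1⁺] < ∞` and the mean of `X_1` is negative (possibly `-∞`),
then `M = sup_{s≥0} X_s` is a.s. finite and, for any `M̃` independent of
`σ(X_u : 0 ≤ u ≤ t)` with the same law as `M`, the random variable
`\underline U^*_t` has the same distribution as `max (M̃ - D_t) 0`. -/
theorem future_drawup_inf_representation_inf_horizon
    {Ω : Type*} [MeasurableSpace Ω] (P : Measure Ω) [IsProbabilityMeasure P]
    (X : ℝ → Ω → ℝ) (hX : IsLevyProcess P X)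
    (hplus : ∫⁻ ω, ENNReal.ofReal (max (X 1 ω) 0) ∂P < ⊤)
    (hmean : ∫⁻ ω, ENNReal.ofReal (max (X 1 ω) 0) ∂P
      < ∫⁻ ω, ENNReal.ofReal (max (-X 1 ω) 0) ∂P)
    (t : ℝ) (ht : 0 ≤ t)
    (Mtilde : Ω → ℝ) (hMmeas : Measurable Mtilde)
    (hMindep : IndepFun Mtilde (fun ω => (fun u : Icc (0:ℝ) t => X u ω)) P)
    (hMlaw : ∀ x : ℝ, P {ω | x < Mtilde ω} = P {ω | (x : EReal) < MSup X ω}) :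
    (∀ᵐ ω ∂P, MSup X ω < ⊤) ∧
    (∀ x : ℝ, P {ω | (x : EReal) < unUStarInf X t ω}
        = P {ω | x < max (Mtilde ω - drawdown X t ω) 0}) :=
  future_drawup_inf_representation_inf_horizon_general P X hX t ht Mtilde hMmeas hMindep hMlaw

end
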